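/- arXiv:2512.02390 — 2 statements merged into one kernel-verified Lean document; each statement's English description precedes it below -/
import Mathlib

section
/- Let T_y be the translation operator on L²(𝕋), (T_y v)(x) = v(x-y). For every y ∈ ℝ and every v ∈ L²(𝕋), the operator S v = (1/4)(T_y v + v + 3 T_{-y} v - T_{-2y} v) satisfies ‖S v‖_{L²} ≤ ‖v‖_{L²}. More precisely, ‖v‖² − ‖S v‖² = (1/16)·‖T_y v − v − T_{-y} v + T_{-2y} v‖² ≥ 0. -/
open MeasureTheory

/-- Translation operator on functions on the circle 𝕋 = ℝ/ℤ. -/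
noncomputable def Tr (y : ℝ) (v : AddCircle (1:ℝ) → ℝ) : AddCircle (1:ℝ) → ℝ :=
  fun x => v (x - (y : AddCircle (1:ℝ)))

lemma Tr_zero (v : AddCircle (1:ℝ) → ℝ) : Tr 0 v = v := by
  funext x; simp [Tr]

lemma memTr (v : AddCircle (1:ℝ) → ℝ) (hv : MemLp v 2) (a : ℝ) : MemLp (Tr a v) 2 :=
  hv.comp_measurePreserving (measurePreserving_sub_right volume _)

lemma Kshift (v : AddCircle (1:ℝ) → ℝ) (a b : ℝ) :
    ∫ x, Tr a v x * Tr b v x = ∫ x, v x * Tr (b - a) v x := by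
  have h := integral_sub_right_eq_self (μ := volume) (fun u => v u * Tr (b - a) v u)
      ((a : AddCircle (1:ℝ)))
  rw [← h]
  refine integral_congr_ae (Filter.Eventually.of_forall fun x => ?_)
  simp only [Tr]
  congr 2
  rw [show ((b - a : ℝ) : AddCircle (1:ℝ)) = (b : AddCircle (1:ℝ)) - (a : AddCircle (1:ℝ))
    from QuotientAddGroup.mk_sub _ b a]
  abel

lemma Ksym (v : AddCircle (1:ℝ) → ℝ) (t : ℝ) :
    ∫ x, v x * Tr t v x = ∫ x, v x * Tr (-t) v x := by
  calc ∫ x, v x * Tr t v x = ∫ x, Tr t v x * Tr 0 v x := by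
        rw [Tr_zero]
        exact integral_congr_ae (Filter.Eventually.of_forall fun x => mul_comm _ _)
    _ = ∫ x, v x * Tr (0 - t) v x := Kshift v t 0
    _ = ∫ x, v x * Tr (-t) v x := by rw [zero_sub]

lemma Kshift0 (v : AddCircle (1:ℝ) → ℝ) (a : ℝ) :
    ∫ x, Tr a v x * v x = ∫ x, v x * Tr (-a) v x := by
  have h := Kshift v a 0
  rw [Tr_zero, zero_sub] at h
  exact h

lemma inner_formula (f g : AddCircle (1:ℝ) → ℝ) (hf : MemLp f 2) (hg : MemLp g 2) :
    (inner ℝ (hf.toLp f) (hg.toLp g) : ℝ) = ∫ x, f x * g x := by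
  rw [L2.inner_def]
  apply integral_congr_ae
  filter_upwards [hf.coeFn_toLp, hg.coeFn_toLp] with x h1 h2
  simp [h1, h2, mul_comm]

lemma inner_self_eq (w : Lp ℝ 2 (volume : Measure (AddCircle (1:ℝ)))) :
    (inner ℝ w w : ℝ) = ∫ x, w x * w x := by
  rw [L2.inner_def]; simp [RCLike.inner_apply, sq]

theorem stmt5 (y : ℝ) (v : AddCircle (1:ℝ) → ℝ) (hv : MemLp v 2) :
    ((∫ x : AddCircle (1:ℝ), (v x) ^ 2) -
        ∫ x : AddCircle (1:ℝ),
          ((1/4) * (Tr y v x + v x + 3 * Tr (-y) v x - Tr (-(2*y)) v x)) ^ 2) =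
      (1/16) * ∫ x : AddCircle (1:ℝ),
          (Tr y v x - v x - Tr (-y) v x + Tr (-(2*y)) v x) ^ 2 ∧
    Real.sqrt (∫ x : AddCircle (1:ℝ),
        ((1/4) * (Tr y v x + v x + 3 * Tr (-y) v x - Tr (-(2*y)) v x)) ^ 2) ≤
      Real.sqrt (∫ x : AddCircle (1:ℝ), (v x) ^ 2) := by
  have h1 : MemLp (Tr y v) 2 := memTr v hv y
  have h3 : MemLp (Tr (-y) v) 2 := memTr v hv (-y)
  have h4 : MemLp (Tr (-(2*y)) v) 2 := memTr v hv (-(2*y))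
  set u1 := h1.toLp (Tr y v) with hu1
  set u2 := hv.toLp v with hu2
  set u3 := h3.toLp (Tr (-y) v) with hu3
  set u4 := h4.toLp (Tr (-(2*y)) v) with hu4
  set n := ∫ x, v x * v x with hn
  set p := ∫ x, v x * Tr (-y) v x with hp
  set q := ∫ x, v x * Tr (-(2*y)) v x with hq
  set r := ∫ x, v x * Tr (-(3*y)) v x with hr
  -- inner product values
  have e11 : (inner ℝ u1 u1 : ℝ) = n := by
    rw [hu1, inner_formula _ _ h1 h1, Kshift, sub_self, Tr_zero]
  have e22 : (inner ℝ u2 u2 : ℝ) = n := by rw [hu2, inner_formula _ _ hv hv]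
  have e33 : (inner ℝ u3 u3 : ℝ) = n := by
    rw [hu3, inner_formula _ _ h3 h3, Kshift, sub_self, Tr_zero]
  have e44 : (inner ℝ u4 u4 : ℝ) = n := by
    rw [hu4, inner_formula _ _ h4 h4, Kshift, sub_self, Tr_zero]
  have e12 : (inner ℝ u1 u2 : ℝ) = p := by
    rw [hu1, hu2, inner_formula _ _ h1 hv, Kshift0]
  have e13 : (inner ℝ u1 u3 : ℝ) = q := by
    rw [hu1, hu3, inner_formula _ _ h1 h3, Kshift, show (-y - y : ℝ) = -(2*y) by ring]
  have e14 : (inner ℝ u1 u4 : ℝ) = r := by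
    rw [hu1, hu4, inner_formula _ _ h1 h4, Kshift, show (-(2*y) - y : ℝ) = -(3*y) by ring]
  have e23 : (inner ℝ u2 u3 : ℝ) = p := by
    rw [hu2, hu3, inner_formula _ _ hv h3]
  have e24 : (inner ℝ u2 u4 : ℝ) = q := by
    rw [hu2, hu4, inner_formula _ _ hv h4]
  have e34 : (inner ℝ u3 u4 : ℝ) = p := by
    rw [hu3, hu4, inner_formula _ _ h3 h4, Kshift, show (-(2*y) - -y : ℝ) = -y by ring]
  have e21 : (inner ℝ u2 u1 : ℝ) = p := by rw [real_inner_comm]; exact e12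
  have e31 : (inner ℝ u3 u1 : ℝ) = q := by rw [real_inner_comm]; exact e13
  have e41 : (inner ℝ u4 u1 : ℝ) = r := by rw [real_inner_comm]; exact e14
  have e32 : (inner ℝ u3 u2 : ℝ) = p := by rw [real_inner_comm]; exact e23
  have e42 : (inner ℝ u4 u2 : ℝ) = q := by rw [real_inner_comm]; exact e24
  have e43 : (inner ℝ u4 u3 : ℝ) = p := by rw [real_inner_comm]; exact e34
  set S : Lp ℝ 2 (volume : Measure (AddCircle (1:ℝ))) :=
    (4⁻¹ : ℝ) • (u1 + u2 + (3:ℝ) • u3 - u4) with hSdef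
  set E : Lp ℝ 2 (volume : Measure (AddCircle (1:ℝ))) :=
    u1 - u2 - u3 + u4 with hEdef
  have hScoe : ⇑S =ᵐ[volume]
      fun x => (1/4) * (Tr y v x + v x + 3 * Tr (-y) v x - Tr (-(2*y)) v x) := by
    rw [hSdef]
    filter_upwards [Lp.coeFn_smul ((4:ℝ)⁻¹) (u1 + u2 + (3:ℝ) • u3 - u4),
      Lp.coeFn_sub (u1 + u2 + (3:ℝ) • u3) u4,
      Lp.coeFn_add (u1 + u2) ((3:ℝ) • u3),
      Lp.coeFn_add u1 u2,
      Lp.coeFn_smul (3:ℝ) u3,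
      h1.coeFn_toLp, hv.coeFn_toLp, h3.coeFn_toLp, h4.coeFn_toLp]
      with x a1 a2 a3 a4 a5 b1 b2 b3 b4
    simp only [Pi.smul_apply, Pi.add_apply, Pi.sub_apply, smul_eq_mul] at a1 a2 a3 a4 a5
    rw [a1, a2, a3, a4, a5, b1, b2, b3, b4]
    ring
  have hEcoe : ⇑E =ᵐ[volume]
      fun x => Tr y v x - v x - Tr (-y) v x + Tr (-(2*y)) v x := by
    rw [hEdef]
    filter_upwards [Lp.coeFn_add (u1 - u2 - u3) u4,
      Lp.coeFn_sub (u1 - u2) u3,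
      Lp.coeFn_sub u1 u2,
      h1.coeFn_toLp, hv.coeFn_toLp, h3.coeFn_toLp, h4.coeFn_toLp]
      with x a1 a2 a3 b1 b2 b3 b4
    simp only [Pi.add_apply, Pi.sub_apply] at a1 a2 a3
    rw [a1, a2, a3, b1, b2, b3, b4]
  have hSint : (∫ x : AddCircle (1:ℝ),
      ((1/4) * (Tr y v x + v x + 3 * Tr (-y) v x - Tr (-(2*y)) v x)) ^ 2) =
      (inner ℝ S S : ℝ) := by
    rw [inner_self_eq]
    refine integral_congr_ae ?_
    filter_upwards [hScoe] with x hx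
    rw [hx]; ring
  have hEint : (∫ x : AddCircle (1:ℝ),
      (Tr y v x - v x - Tr (-y) v x + Tr (-(2*y)) v x) ^ 2) = (inner ℝ E E : ℝ) := by
    rw [inner_self_eq]
    refine integral_congr_ae ?_
    filter_upwards [hEcoe] with x hx
    rw [hx]; ring
  have expS : (inner ℝ S S : ℝ) = (1/16) * (12*n + 2*p + 4*q - 2*r) := by
    rw [hSdef]
    simp only [inner_add_left, inner_add_right, inner_sub_left, inner_sub_right,
      real_inner_smul_left, real_inner_smul_right]
    rw [e11, e22, e33, e44, e12, e13, e14, e23, e24, e34, e21, e31, e41, e32, e42, e43]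
    ring
  have expE : (inner ℝ E E : ℝ) = 4*n - 2*p - 4*q + 2*r := by
    rw [hEdef]
    simp only [inner_add_left, inner_add_right, inner_sub_left, inner_sub_right]
    rw [e11, e22, e33, e44, e12, e13, e14, e23, e24, e34, e21, e31, e41, e32, e42, e43]
    ring
  have nsq : (∫ x : AddCircle (1:ℝ), (v x) ^ 2) = n := by
    rw [hn]
    refine integral_congr_ae (Filter.Eventually.of_forall fun x => ?_)
    ring
  have hE0 : 0 ≤ ∫ x : AddCircle (1:ℝ),
      (Tr y v x - v x - Tr (-y) v x + Tr (-(2*y)) v x) ^ 2 :=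
    integral_nonneg fun x => sq_nonneg _
  constructor
  · rw [hSint, hEint, expS, expE, nsq]; ring
  · apply Real.sqrt_le_sqrt
    have h0 : (0:ℝ) ≤ 4*n - 2*p - 4*q + 2*r := by rw [← expE, ← hEint]; exact hE0
    rw [hSint, expS, nsq]
    linarith
end

section
/- L²-stability of composition with the backward characteristic map: let g : 𝕋 → ℝ be Lipschitz with Lipschitz constant L, let Δt > 0 satisfy L·Δt ≤ 1/2, and set X(x) = x − g(x)Δt. Then for every v ∈ L²(𝕋), ‖v ∘ X‖_{L²(𝕋)} ≤ (1 − LΔt)^{-1/2}·‖v‖_{L²(𝕋)} ≤ (1 + 2LΔt)·‖v‖_{L²(𝕋)}. -/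
open MeasureTheory Set Filter

theorem stmt16 (L : NNReal) (g : AddCircle (1:ℝ) → ℝ) (hg : LipschitzWith L g)
    (Δt : ℝ) (hΔt : 0 < Δt) (hc : (L : ℝ) * Δt ≤ 1/2)
    (v : AddCircle (1:ℝ) → ℝ) (hv : MemLp v 2) :
    Real.sqrt (∫ x : AddCircle (1:ℝ),
        (v (x - ((g x * Δt : ℝ) : AddCircle (1:ℝ)))) ^ 2) ≤
      (1 - (L : ℝ) * Δt) ^ (-(1:ℝ)/2) *
        Real.sqrt (∫ x : AddCircle (1:ℝ), (v x) ^ 2) ∧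
    (1 - (L : ℝ) * Δt) ^ (-(1:ℝ)/2) *
        Real.sqrt (∫ x : AddCircle (1:ℝ), (v x) ^ 2) ≤
      (1 + 2 * (L : ℝ) * Δt) * Real.sqrt (∫ x : AddCircle (1:ℝ), (v x) ^ 2) := by
  have ha0 : 0 ≤ (L : ℝ) * Δt := mul_nonneg L.coe_nonneg hΔt.le
  set a : ℝ := (L : ℝ) * Δt with ha_def
  have hc0 : (0:ℝ) < 1 - a := by linarith
  set X : AddCircle (1:ℝ) → AddCircle (1:ℝ) :=
    fun y => y - ((g y * Δt : ℝ) : AddCircle (1:ℝ)) with hX_def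
  set G : ℝ → ℝ := fun x => x - g ((x : ℝ) : AddCircle (1:ℝ)) * Δt with hG_def
  have hXmk : ∀ x : ℝ, X ((x:ℝ) : AddCircle (1:ℝ)) = ((G x : ℝ) : AddCircle (1:ℝ)) := by
    intro x
    simp only [hX_def, hG_def]
    exact (QuotientAddGroup.mk_sub _ x _).symm
  -- Lipschitz estimates for the lift
  have hdist : ∀ x y : ℝ, dist ((x : ℝ) : AddCircle (1:ℝ)) ((y : ℝ) : AddCircle (1:ℝ)) ≤ |x - y| := by
    intro x y
    rw [dist_eq_norm]
    have : ((x : ℝ) : AddCircle (1:ℝ)) - ((y : ℝ) : AddCircle (1:ℝ)) = ((x - y : ℝ) : AddCircle (1:ℝ)) :=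
      (QuotientAddGroup.mk_sub _ x y).symm
    rw [this]
    exact (QuotientAddGroup.norm_mk_le_norm (m := x - y)).trans (le_of_eq (Real.norm_eq_abs _))
  have hglip : ∀ x y : ℝ, |g ((x:ℝ) : AddCircle (1:ℝ)) - g ((y:ℝ) : AddCircle (1:ℝ))| ≤ (L:ℝ) * |x - y| := by
    intro x y
    calc |g ((x:ℝ) : AddCircle (1:ℝ)) - g ((y:ℝ) : AddCircle (1:ℝ))|
        = dist (g ((x:ℝ) : AddCircle (1:ℝ))) (g ((y:ℝ) : AddCircle (1:ℝ))) := (Real.dist_eq _ _).symm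
      _ ≤ (L:ℝ) * dist ((x:ℝ) : AddCircle (1:ℝ)) ((y:ℝ) : AddCircle (1:ℝ)) := hg.dist_le_mul _ _
      _ ≤ (L:ℝ) * |x - y| := mul_le_mul_of_nonneg_left (hdist x y) L.coe_nonneg
  have hlower : ∀ x y : ℝ, x ≤ y → (1 - a) * (y - x) ≤ G y - G x := by
    intro x y hxy
    have h2 : |g ((y:ℝ) : AddCircle (1:ℝ)) - g ((x:ℝ) : AddCircle (1:ℝ))| * Δt ≤ (L:ℝ) * |y - x| * Δt :=
      mul_le_mul_of_nonneg_right (hglip y x) hΔt.le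
    have habs : |y - x| = y - x := abs_of_nonneg (by linarith)
    have h3 : (g ((y:ℝ) : AddCircle (1:ℝ)) - g ((x:ℝ) : AddCircle (1:ℝ))) * Δt ≤ (L:ℝ) * (y - x) * Δt := by
      calc (g ((y:ℝ) : AddCircle (1:ℝ)) - g ((x:ℝ) : AddCircle (1:ℝ))) * Δt
          ≤ |g ((y:ℝ) : AddCircle (1:ℝ)) - g ((x:ℝ) : AddCircle (1:ℝ))| * Δt :=
            mul_le_mul_of_nonneg_right (le_abs_self _) hΔt.le
        _ ≤ (L:ℝ) * (y - x) * Δt := by rw [← habs]; exact h2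
    simp only [hG_def]
    nlinarith [h3]
  have hGcont : Continuous G := by
    apply continuous_id.sub
    exact ((hg.continuous).comp (AddCircle.continuous_mk' 1)).mul continuous_const
  have hGper : ∀ x : ℝ, G (x + 1) = G x + 1 := by
    intro x
    simp only [hG_def]
    rw [AddCircle.coe_add_period 1 x]
    ring
  have hGmono : StrictMono G := by
    intro x y hxy
    have := hlower x y hxy.le
    nlinarith
  have hGadd : ∀ (n : ℤ) (x : ℝ), G (x + n) = G x + n := by
    intro n x
    induction n using Int.induction_on with
    | zero => simp
    | succ k ih =>
        have : x + ((k:ℤ)+1 : ℤ) = (x + (k:ℤ)) + 1 := by push_cast; ring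
        rw [this, hGper, ih]; push_cast; ring
    | pred k ih =>
        have h1 : (x + (-(k:ℤ)-1 : ℤ)) + 1 = x + (-(k:ℤ) : ℤ) := by push_cast; ring
        have := hGper (x + (-(k:ℤ)-1 : ℤ))
        rw [h1, ih] at this
        push_cast at this ⊢
        linarith
  have htop : Tendsto G atTop atTop := by
    apply tendsto_atTop_mono' _ _ (tendsto_atTop_add_const_right atTop (G 0 - 1) tendsto_id)
    filter_upwards [eventually_ge_atTop (0:ℝ)] with x hx
    have h1 : (⌊x⌋ : ℝ) ≤ x := Int.floor_le x
    have h2 : x - 1 < ⌊x⌋ := by linarith [Int.lt_floor_add_one x]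
    have h3 : G x ≥ G ((⌊x⌋ : ℝ)) := hGmono.monotone h1
    have h5 : G ((⌊x⌋:ℝ)) = G 0 + ⌊x⌋ := by simpa using hGadd ⌊x⌋ 0
    simp only [id]
    linarith
  have hbot : Tendsto G atBot atBot := by
    apply tendsto_atBot_mono' _ _ (tendsto_atBot_add_const_right atBot (G 0 + 1) tendsto_id)
    filter_upwards [eventually_le_atBot (0:ℝ)] with x hx
    have h1 : x ≤ (⌈x⌉ : ℝ) := Int.le_ceil x
    have h2 : (⌈x⌉:ℝ) < x + 1 := Int.ceil_lt_add_one x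
    have h3 : G x ≤ G ((⌈x⌉ : ℝ)) := hGmono.monotone h1
    have h5 : G ((⌈x⌉:ℝ)) = G 0 + ⌈x⌉ := by simpa using hGadd ⌈x⌉ 0
    simp only [id]
    linarith
  have hGsurj : Function.Surjective G := hGcont.surjective htop hbot
  set e : ℝ ≃o ℝ := StrictMono.orderIsoOfSurjective G hGmono hGsurj with he
  have heG : ∀ x, e x = G x := fun x => rfl
  set K : NNReal := ⟨(1-a)⁻¹, inv_nonneg.2 hc0.le⟩ with hK
  have hφlip : LipschitzWith K (e.symm : ℝ → ℝ) := by
    apply LipschitzWith.of_dist_le_mul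
    intro u w
    have key : ∀ u w : ℝ, e.symm u ≤ e.symm w → dist (e.symm u) (e.symm w) ≤ K * dist u w := by
      intro u w huw
      have h1 := hlower (e.symm u) (e.symm w) huw
      have h2 : G (e.symm u) = u := by rw [← heG]; exact e.apply_symm_apply u
      have h3 : G (e.symm w) = w := by rw [← heG]; exact e.apply_symm_apply w
      rw [Real.dist_eq, Real.dist_eq, abs_of_nonpos (by linarith), abs_of_nonpos (by nlinarith)]
      have hK' : (K:ℝ) = (1-a)⁻¹ := rfl
      rw [hK', inv_mul_eq_div, le_div_iff₀ hc0]
      nlinarith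
    rcases le_total (e.symm u) (e.symm w) with h | h
    · exact key u w h
    · rw [dist_comm, dist_comm u w]; exact key w u h
  -- continuity / measurability of X
  have hXcont : Continuous X := by
    apply continuous_id.sub
    exact (AddCircle.continuous_mk' 1).comp ((hg.continuous).mul continuous_const)
  have hXmeas : Measurable X := hXcont.measurable
  -- key measure bound
  have hkey : ∀ A : Set (AddCircle (1:ℝ)), MeasurableSet A →
      volume (X ⁻¹' A) ≤ (K : ENNReal) * volume A := by
    intro A hA
    have hXA : MeasurableSet (X ⁻¹' A) := hXmeas hA
    have h1 : volume (X ⁻¹' A) =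
        volume (((↑) : ℝ → AddCircle (1:ℝ)) ⁻¹' (X ⁻¹' A) ∩ Ioc 0 (0+1)) := by
      rw [← (AddCircle.measurePreserving_mk 1 0).measure_preimage hXA.nullMeasurableSet,
        Measure.restrict_apply' measurableSet_Ioc]
    have h2 : ((↑) : ℝ → AddCircle (1:ℝ)) ⁻¹' (X ⁻¹' A) =
        G ⁻¹' (((↑) : ℝ → AddCircle (1:ℝ)) ⁻¹' A) := by
      ext x
      simp only [mem_preimage, hXmk x]
    have h3 : G ⁻¹' (((↑) : ℝ → AddCircle (1:ℝ)) ⁻¹' A) =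
        (e.symm : ℝ → ℝ) '' (((↑) : ℝ → AddCircle (1:ℝ)) ⁻¹' A) := by
      ext x
      constructor
      · intro hx
        exact ⟨G x, hx, by rw [← heG]; exact e.symm_apply_apply x⟩
      · rintro ⟨b, hb, rfl⟩
        have : G (e.symm b) = b := by rw [← heG]; exact e.apply_symm_apply b
        simpa [mem_preimage, this] using hb
    have hsub : (e.symm : ℝ → ℝ) '' (((↑) : ℝ → AddCircle (1:ℝ)) ⁻¹' A) ∩ Ioc 0 (0+1) ⊆
        (e.symm : ℝ → ℝ) '' ((((↑) : ℝ → AddCircle (1:ℝ)) ⁻¹' A) ∩ Ioc (G 0) (G 0 + 1)) := by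
      rintro y ⟨⟨b, hb, rfl⟩, hy⟩
      refine ⟨b, ⟨hb, ?_⟩, rfl⟩
      have hb1 : G (e.symm b) = b := by rw [← heG]; exact e.apply_symm_apply b
      have h01 : G 1 = G 0 + 1 := by simpa using hGper 0
      constructor
      · rw [← hb1]; exact hGmono (by simpa using hy.1)
      · rw [← hb1, ← h01]; exact hGmono.monotone (by simpa using hy.2)
    have himg : volume ((e.symm : ℝ → ℝ) '' ((((↑) : ℝ → AddCircle (1:ℝ)) ⁻¹' A) ∩ Ioc (G 0) (G 0 + 1)))
        ≤ (K : ENNReal) * volume ((((↑) : ℝ → AddCircle (1:ℝ)) ⁻¹' A) ∩ Ioc (G 0) (G 0 + 1)) := by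
      have := hφlip.hausdorffMeasure_image_le (d := 1) zero_le_one
        ((((↑) : ℝ → AddCircle (1:ℝ)) ⁻¹' A) ∩ Ioc (G 0) (G 0 + 1))
      rwa [MeasureTheory.hausdorffMeasure_real, ENNReal.rpow_one] at this
    have h4 : volume ((((↑) : ℝ → AddCircle (1:ℝ)) ⁻¹' A) ∩ Ioc (G 0) (G 0 + 1)) = volume A := by
      rw [← Measure.restrict_apply' measurableSet_Ioc]
      exact (AddCircle.measurePreserving_mk 1 (G 0)).measure_preimage hA.nullMeasurableSet
    calc volume (X ⁻¹' A)
        = volume ((e.symm : ℝ → ℝ) '' (((↑) : ℝ → AddCircle (1:ℝ)) ⁻¹' A) ∩ Ioc 0 (0+1)) := by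
          rw [h1, h2, h3]
      _ ≤ volume ((e.symm : ℝ → ℝ) '' ((((↑) : ℝ → AddCircle (1:ℝ)) ⁻¹' A) ∩ Ioc (G 0) (G 0 + 1))) :=
          measure_mono hsub
      _ ≤ (K : ENNReal) * volume ((((↑) : ℝ → AddCircle (1:ℝ)) ⁻¹' A) ∩ Ioc (G 0) (G 0 + 1)) := himg
      _ = (K : ENNReal) * volume A := by rw [h4]
  -- map measure bound
  have hmap_le : Measure.map X volume ≤ (K : ENNReal) • volume := by
    rw [Measure.le_iff]
    intro s hs
    rw [Measure.map_apply hXmeas hs, Measure.smul_apply, smul_eq_mul]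
    exact hkey s hs
  have hac : Measure.map X volume ≪ (volume : Measure (AddCircle (1:ℝ))) :=
    Measure.absolutelyContinuous_of_le_smul hmap_le
  -- measurability setup
  have hvm : AEStronglyMeasurable v volume := hv.1
  have hvXm : AEStronglyMeasurable (fun x => v (X x)) volume :=
    (hvm.mono_ac hac).comp_aemeasurable hXmeas.aemeasurable
  -- lintegral bound
  set F : AddCircle (1:ℝ) → ENNReal := fun y => ENNReal.ofReal ((v y) ^ 2) with hF_def
  have hFaem : AEMeasurable F (Measure.map X volume) := by
    exact (ENNReal.measurable_ofReal.comp (measurable_id.pow_const 2)).comp_aemeasurable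
      ((hvm.mono_ac hac).aemeasurable)
  have hlin : ∫⁻ x, F (X x) ≤ (K : ENNReal) * ∫⁻ x, F x := by
    calc ∫⁻ x, F (X x) = ∫⁻ y, F y ∂(Measure.map X volume) :=
          (lintegral_map' hFaem hXmeas.aemeasurable).symm
      _ ≤ ∫⁻ y, F y ∂((K : ENNReal) • volume) := lintegral_mono' hmap_le le_rfl
      _ = (K : ENNReal) * ∫⁻ x, F x := lintegral_smul_measure _ _
  -- integrability
  have hI2 : Integrable (fun x => (v x) ^ 2) volume := hv.integrable_sq
  have hA2 : ∫⁻ x, F x < ⊤ := by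
    have := hI2.2
    rw [hasFiniteIntegral_iff_norm] at this
    refine lt_of_le_of_lt (lintegral_mono fun x => ?_) this
    simp [hF_def, ENNReal.ofReal_le_ofReal, abs_nonneg, le_abs_self]
  have hA1 : ∫⁻ x, F (X x) < ⊤ :=
    lt_of_le_of_lt hlin (ENNReal.mul_lt_top ENNReal.coe_lt_top hA2)
  -- Bochner integrals as lintegrals
  have hI2eq : ∫ x, (v x) ^ 2 = (∫⁻ x, F x).toReal := by
    rw [integral_eq_lintegral_of_nonneg_ae (Eventually.of_forall fun x => sq_nonneg _)
      (hvm.pow 2)]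
  have hI1eq : ∫ x, (v (X x)) ^ 2 = (∫⁻ x, F (X x)).toReal := by
    rw [integral_eq_lintegral_of_nonneg_ae (Eventually.of_forall fun x => sq_nonneg _)
      (hvXm.pow 2)]
  have hI2nn : 0 ≤ ∫ x, (v x) ^ 2 := integral_nonneg fun x => sq_nonneg _
  have hmain : ∫ x, (v (X x)) ^ 2 ≤ (1 - a)⁻¹ * ∫ x, (v x) ^ 2 := by
    rw [hI1eq, hI2eq]
    have h1 : (∫⁻ x, F (X x)).toReal ≤ ((K : ENNReal) * ∫⁻ x, F x).toReal :=
      ENNReal.toReal_mono (ENNReal.mul_ne_top ENNReal.coe_ne_top hA2.ne) hlin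
    rwa [ENNReal.toReal_mul, ENNReal.coe_toReal] at h1
  -- rpow manipulation
  have hrpow : (1 - a) ^ (-(1:ℝ)/2) = Real.sqrt ((1-a)⁻¹) := by
    rw [neg_div, Real.rpow_neg hc0.le, ← Real.sqrt_eq_rpow, ← Real.sqrt_inv]
  have hmain' : ∫ x, (v (x - ((g x * Δt : ℝ) : AddCircle (1:ℝ)))) ^ 2 ≤ (1 - a)⁻¹ * ∫ x, (v x) ^ 2 := by
    simpa only [hX_def] using hmain
  have hsqrt2 : Real.sqrt ((1-a)⁻¹) ≤ 1 + 2 * a := by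
    have h1 : (1-a)⁻¹ ≤ (1 + 2*a)^2 := by
      rw [inv_le_iff_one_le_mul₀ hc0]
      nlinarith [mul_nonneg ha0 (mul_nonneg ha0 ha0), mul_nonneg ha0 ha0,
        mul_nonneg (mul_nonneg ha0 ha0) (by linarith : (0:ℝ) ≤ 1 - 2*a)]
    calc Real.sqrt ((1-a)⁻¹) ≤ Real.sqrt ((1 + 2*a)^2) := Real.sqrt_le_sqrt h1
      _ = 1 + 2*a := Real.sqrt_sq (by linarith)
  have h2a : 2 * (L:ℝ) * Δt = 2 * a := by rw [ha_def]; ring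
  constructor
  · calc Real.sqrt (∫ x, (v (x - ((g x * Δt : ℝ) : AddCircle (1:ℝ)))) ^ 2)
        ≤ Real.sqrt ((1 - a)⁻¹ * ∫ x, (v x) ^ 2) := Real.sqrt_le_sqrt hmain'
      _ = Real.sqrt ((1 - a)⁻¹) * Real.sqrt (∫ x, (v x) ^ 2) :=
          Real.sqrt_mul (inv_nonneg.2 hc0.le) _
      _ = (1 - a) ^ (-(1:ℝ)/2) * Real.sqrt (∫ x, (v x) ^ 2) := by rw [hrpow]
  · rw [hrpow, h2a]
    exact mul_le_mul_of_nonneg_right hsqrt2 (Real.sqrt_nonneg _)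
end
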